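/- arXiv:1010.0382 — 2 statements merged into one kernel-verified Lean document; each statement's English description precedes it below -/
import Mathlib

section
/- Let n : ℕ and let R ⊆ FreeGroup (Fin n) be a set of relators such that the presentation ⟨Fin n; R⟩ is recursively presented, i.e., REPred (fun l : List (Fin n × Bool) => FreeGroup.mk l ∈ R). Then the 'yes' part of the word problem for the presented group is recursively enumerable: REPred (fun l : List (Fin n × Bool) => FreeGroup.mk l ∈ Subgroup.normalClosure R). -/
/-!
An element lies in the normal closure of `R` iff it is a product of conjugates
`w r^±1 w⁻¹` of relators `r ∈ R`. So a word `l` is trivial in `⟨Fin n; R⟩` iff some finite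
list of triples `(w, r, ±)`, every `r` in `R`, has a product that freely reduces to the same
normal form as `l`. Membership of each `r` in `R` is semi-decidable, finitely many
semi-decisions can be run in parallel, and free reduction is primitive recursive; searching
over all such lists therefore semi-decides the word problem.
-/

open Nat.Partrec (Code)
open Filter

namespace REPred

variable {α β : Type*} [Primcodable α] [Primcodable β] {p q : α → Prop}

theorem of_exists_computable₂ {D : α → ℕ → Bool} (hD : Computable₂ D)
    (h : ∀ a, p a ↔ ∃ k, D a k = true) : REPred p := by
  have hsearch : Partrec fun a => Nat.rfind (fun k => Part.some (D a k) : ℕ →. Bool) :=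
    Partrec.rfind hD.partrec₂
  refine hsearch.dom_re.of_eq fun a => Nat.rfind_dom.trans ?_
  simp [h]

/-- `D a k` records whether the universal machine running a code for `p` halts on `a` within
`k` steps. -/
theorem exists_primrec₂_monotone (hp : REPred p) :
    ∃ D : α → ℕ → Bool, Primrec₂ D ∧ (∀ a, Monotone (D a)) ∧
      ∀ a, p a ↔ ∃ k, D a k = true := by
  obtain ⟨c, hc⟩ := Code.exists_code.1 hp
  have hdom : ∀ a, p a ↔ (c.eval (Encodable.encode a)).Dom := fun a => by
    simp [hc, Encodable.encodek, Part.assert]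
  refine ⟨fun a k => (Code.evaln k c (Encodable.encode a)).isSome, ?_, ?_, fun a => ?_⟩
  · exact Primrec.option_isSome.comp (Code.primrec_evaln.comp
      ((Primrec.snd.pair (Primrec.const c)).pair (Primrec.encode.comp Primrec.fst))) |>.to₂
  · intro a k₁ k₂ hk
    simp only [Bool.le_iff_imp, Option.isSome_iff_exists]
    exact fun ⟨x, hx⟩ => ⟨x, Code.evaln_mono hk hx⟩
  · simp only [hdom, Part.dom_iff_mem, Code.evaln_complete, Option.isSome_iff_exists]
    exact exists_comm

protected theorem comp (hp : REPred p) {f : β → α} (hf : Computable f) :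
    REPred fun b => p (f b) :=
  Partrec.comp hp hf

protected theorem and (hp : REPred p) (hq : REPred q) : REPred fun a => p a ∧ q a := by
  obtain ⟨D₁, hD₁, -, hp⟩ := hp.exists_primrec₂_monotone
  obtain ⟨D₂, hD₂, -, hq⟩ := hq.exists_primrec₂_monotone
  refine of_exists_computable₂ (D := fun a k => D₁ a k.unpair.1 && D₂ a k.unpair.2) ?_
    fun a => ?_
  · have hk := Primrec.unpair.comp (Primrec.snd (α := α) (β := ℕ))
    exact (Primrec.and.comp (hD₁.comp Primrec.fst (Primrec.fst.comp hk))
      (hD₂.comp Primrec.fst (Primrec.snd.comp hk))).to_comp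
  · simp only [hp, hq, Bool.and_eq_true]
    constructor
    · rintro ⟨⟨k₁, h₁⟩, k₂, h₂⟩
      exact ⟨Nat.pair k₁ k₂, by simpa [Nat.unpair_pair] using ⟨h₁, h₂⟩⟩
    · rintro ⟨k, h₁, h₂⟩
      exact ⟨⟨_, h₁⟩, _, h₂⟩

theorem exists_snd {r : α → β → Prop} (hr : REPred fun x : α × β => r x.1 x.2) :
    REPred fun a => ∃ b, r a b := by
  obtain ⟨D, hD, -, hr⟩ := hr.exists_primrec₂_monotone
  simp only [Prod.forall] at hr
  refine of_exists_computable₂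
    (D := fun a k => Option.casesOn (Encodable.decode (α := β × ℕ) k) false
      fun bk => D (a, bk.1) bk.2) ?_ fun a => ?_
  · exact (Primrec.option_casesOn (Primrec.decode.comp Primrec.snd) (Primrec.const false)
      (hD.comp ((Primrec.fst.comp Primrec.fst).pair (Primrec.fst.comp Primrec.snd))
        (Primrec.snd.comp Primrec.snd)).to₂).to_comp
  · simp only [hr]
    constructor
    · rintro ⟨b, k, h⟩
      exact ⟨Encodable.encode (b, k), by simpa [Encodable.encodek] using h⟩
    · rintro ⟨k, h⟩
      cases hk : Encodable.decode (α := β × ℕ) k with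
      | none => simp [hk] at h
      | some bk => exact ⟨bk.1, bk.2, by simpa [hk] using h⟩

theorem forall_mem_list (hp : REPred p) : REPred fun l : List α => ∀ a ∈ l, p a := by
  obtain ⟨D, hD, hmono, hp⟩ := hp.exists_primrec₂_monotone
  refine of_exists_computable₂ (D := fun l k => l.all (D · k)) ?_ fun l => ?_
  · have hfold : Primrec₂ fun (l : List α) k => l.foldr (fun a b => D a k && b) true :=
      Primrec.list_foldr Primrec.fst (Primrec.const true)
        (Primrec.and.comp
          (hD.comp (Primrec.fst.comp Primrec.snd) (Primrec.snd.comp Primrec.fst))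
          (Primrec.snd.comp Primrec.snd)).to₂
    refine hfold.to_comp.of_eq fun ⟨l, k⟩ => ?_
    induction l <;> simp_all
  · simp only [hp, List.all_eq_true]
    refine ⟨fun h => ?_, fun ⟨k, h⟩ a ha => ⟨k, h a ha⟩⟩
    -- monotonicity lets a common stage serve all the finitely many elements of `l`
    have hev : ∀ a ∈ l, ∀ᶠ k in atTop, D a k = true := fun a ha =>
      let ⟨k, hk⟩ := h a ha
      eventually_atTop.2 ⟨k, fun _ hk' => Bool.le_iff_imp.1 (hmono a hk') hk⟩
    exact ((eventually_all_finite l.finite_toSet).2 hev).exists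

end REPred

namespace FreeGroup

variable {α : Type*}

theorem primrec_invRev [Primcodable α] :
    Primrec (invRev : List (α × Bool) → List (α × Bool)) :=
  Primrec.list_reverse.comp <| Primrec.list_map Primrec.id
    ((Primrec.fst.comp Primrec.snd).pair (Primrec.not.comp (Primrec.snd.comp Primrec.snd))).to₂

theorem reduce_cons_eq_ite [DecidableEq α] (x : α × Bool) (L : List (α × Bool)) :
    reduce (x :: L) =
      if (reduce L).head? = some (x.1, !x.2) then (reduce L).tail else x :: reduce L := by
  rw [reduce.cons]
  rcases reduce L with _ | ⟨y, L'⟩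
  · simp
  · have hcancel : some y = some (x.1, !x.2) ↔ x.1 = y.1 ∧ x.2 = !y.2 := by
      obtain ⟨a, b⟩ := x; obtain ⟨c, d⟩ := y
      cases b <;> cases d <;> simp [eq_comm]
    simp only [List.head?_cons, List.tail_cons, hcancel]

theorem primrec_reduce [Primcodable α] [DecidableEq α] :
    Primrec (reduce : List (α × Bool) → List (α × Bool)) := by
  have hstep : Primrec₂ fun (x : α × Bool) (L : List (α × Bool)) =>
      if L.head? = some (x.1, !x.2) then L.tail else x :: L :=
    Primrec.ite (Primrec.eq.comp (Primrec.list_head?.comp Primrec.snd)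
        (Primrec.option_some.comp ((Primrec.fst.comp Primrec.fst).pair
          (Primrec.not.comp (Primrec.snd.comp Primrec.fst)))))
      (Primrec.list_tail.comp Primrec.snd) (Primrec.list_cons.comp Primrec.fst Primrec.snd)
  have hfold : Primrec fun L : List (α × Bool) =>
      L.foldr (fun x L' => if L'.head? = some (x.1, !x.2) then L'.tail else x :: L') [] :=
    Primrec.list_foldr Primrec.id (Primrec.const [])
      (hstep.comp (Primrec.fst.comp Primrec.snd) (Primrec.snd.comp Primrec.snd)).to₂
  refine hfold.of_eq fun L => ?_
  induction L with
  | nil => rfl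
  | cons x L ih => simp only [List.foldr_cons, ih, reduce_cons_eq_ite]

theorem primrecRel_mk_eq_mk [Primcodable α] [DecidableEq α] :
    PrimrecRel fun L₁ L₂ : List (α × Bool) => mk L₁ = mk L₂ :=
  (Primrec.eq.comp₂ (primrec_reduce.comp₂ Primrec₂.left)
    (primrec_reduce.comp₂ Primrec₂.right)).of_eq fun _ _ => ⟨reduce.exact, reduce.sound⟩

theorem mk_flatMap {β : Type*} (L : List β) (f : β → List (α × Bool)) :
    mk (L.flatMap f) = (L.map fun b => mk (f b)).prod := by
  induction L with
  | nil => rfl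
  | cons b L ih => rw [List.flatMap_cons, ← mul_mk, ih, List.map_cons, List.prod_cons]

/-- The word `w r^±1 w⁻¹` coded by `t = (w, r, b)`, with exponent `+1` iff `b = true`. -/
def conjWord (t : List (α × Bool) × List (α × Bool) × Bool) : List (α × Bool) :=
  t.1 ++ cond t.2.2 t.2.1 (invRev t.2.1) ++ invRev t.1

theorem mk_conjWord (t : List (α × Bool) × List (α × Bool) × Bool) :
    mk (conjWord t) = mk t.1 * cond t.2.2 (mk t.2.1) (mk t.2.1)⁻¹ * (mk t.1)⁻¹ := by
  obtain ⟨w, r, _ | _⟩ := t <;> simp [conjWord, mul_mk, inv_mk]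

theorem primrec_conjWord [Primcodable α] : Primrec (conjWord (α := α)) :=
  Primrec.list_append.comp
    (Primrec.list_append.comp Primrec.fst
      (Primrec.cond (Primrec.snd.comp Primrec.snd) (Primrec.fst.comp Primrec.snd)
        (primrec_invRev.comp (Primrec.fst.comp Primrec.snd))))
    (primrec_invRev.comp Primrec.fst)

theorem mk_conjWord_mem_normalClosure {R : Set (FreeGroup α)}
    {t : List (α × Bool) × List (α × Bool) × Bool} (ht : mk t.2.1 ∈ R) :
    mk (conjWord t) ∈ Subgroup.normalClosure R := by
  have hr := Subgroup.subset_normalClosure ht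
  rw [mk_conjWord]
  refine Subgroup.normalClosure_normal.conj_mem _ ?_ _
  cases t.2.2
  · exact inv_mem hr
  · exact hr

theorem exists_mk_conjWord_eq {R : Set (FreeGroup α)} {x : FreeGroup α}
    (hx : x ∈ Group.conjugatesOfSet R ∪ (Group.conjugatesOfSet R)⁻¹) :
    ∃ t : List (α × Bool) × List (α × Bool) × Bool,
      mk t.2.1 ∈ R ∧ mk (conjWord t) = x := by
  classical
  rcases hx with hx | hx
  · obtain ⟨r, hr, hconj⟩ := Group.mem_conjugatesOfSet_iff.1 hx
    obtain ⟨c, rfl⟩ := isConj_iff.1 hconj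
    refine ⟨(c.toWord, r.toWord, true), by rwa [mk_toWord], ?_⟩
    rw [mk_conjWord, cond_true, mk_toWord, mk_toWord]
  · obtain ⟨r, hr, hconj⟩ := Group.mem_conjugatesOfSet_iff.1 hx
    obtain ⟨c, hc⟩ := isConj_iff.1 hconj
    refine ⟨(c.toWord, r.toWord, false), by rwa [mk_toWord], ?_⟩
    rw [mk_conjWord, cond_false, mk_toWord, mk_toWord, ← inv_inv x, ← hc]
    group

theorem mem_normalClosure_iff_exists_conjWord {R : Set (FreeGroup α)} {x : FreeGroup α} :
    x ∈ Subgroup.normalClosure R ↔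
      ∃ L : List (List (α × Bool) × List (α × Bool) × Bool),
        (∀ t ∈ L, mk t.2.1 ∈ R) ∧ mk (L.flatMap conjWord) = x := by
  constructor
  · intro hx
    rw [← Subgroup.mem_toSubmonoid, Subgroup.normalClosure,
      Subgroup.closure_toSubmonoid] at hx
    induction hx using Submonoid.closure_induction with
    | mem y hy =>
      obtain ⟨t, ht, rfl⟩ := exists_mk_conjWord_eq hy
      exact ⟨[t], by simpa using ht, by simp⟩
    | one => exact ⟨[], by simp, rfl⟩
    | mul y z _ _ hy hz =>
      obtain ⟨L₁, hL₁, rfl⟩ := hy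
      obtain ⟨L₂, hL₂, rfl⟩ := hz
      refine ⟨L₁ ++ L₂, fun t ht => ?_, by rw [List.flatMap_append, mul_mk]⟩
      exact (List.mem_append.1 ht).elim (hL₁ t) (hL₂ t)
  · rintro ⟨L, hL, rfl⟩
    rw [mk_flatMap]
    exact (Subgroup.normalClosure R).list_prod_mem <| List.forall_mem_map.2 fun t ht =>
      mk_conjWord_mem_normalClosure (hL t ht)

end FreeGroup

/-- The "yes" part of the word problem in a recursively presented group
`⟨Fin n; R⟩` is recursively enumerable. -/
theorem word_problem_yes_part_re (n : ℕ) (R : Set (FreeGroup (Fin n)))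
    (hR : REPred (fun l : List (Fin n × Bool) => FreeGroup.mk l ∈ R)) :
    REPred (fun l : List (Fin n × Bool) =>
      FreeGroup.mk l ∈ Subgroup.normalClosure R) := by
  have hrelators : REPred fun L : List (List (Fin n × Bool) × List (Fin n × Bool) × Bool) =>
      ∀ t ∈ L, FreeGroup.mk t.2.1 ∈ R :=
    (hR.comp (Computable.fst.comp Computable.snd)).forall_mem_list
  have hproduct : PrimrecRel fun (l : List (Fin n × Bool))
      (L : List (List (Fin n × Bool) × List (Fin n × Bool) × Bool)) =>
      FreeGroup.mk (L.flatMap FreeGroup.conjWord) = FreeGroup.mk l :=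
    FreeGroup.primrecRel_mk_eq_mk.comp
      (Primrec.list_flatMap Primrec.snd (FreeGroup.primrec_conjWord.comp Primrec.snd).to₂)
      Primrec.fst
  exact ((hrelators.comp Computable.snd).and hproduct.computablePred.to_re).exists_snd.of_eq
    fun l => FreeGroup.mem_normalClosure_iff_exists_conjWord.symm
end

section
/- Tietze transformation (T1)/(T2), introducing or canceling a generator, preserves the isomorphism type of a presented group: let α be a type, rels ⊆ FreeGroup α a set of relators, and s ∈ FreeGroup α. Let ι := FreeGroup.map (Option.some) : FreeGroup α →* FreeGroup (Option α) be the embedding induced by the inclusion of generators, and let y := FreeGroup.of (none : Option α) be the new generator. Then PresentedGroup rels is isomorphic to PresentedGroup (insert (y * (ι s)⁻¹) (ι '' rels)), i.e., Nonempty (PresentedGroup rels ≃* PresentedGroup (insert (FreeGroup.of none * (FreeGroup.map Option.some s)⁻¹) (⇑(FreeGroup.map Option.some) '' rels))). -/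
/-!
Both presentations are related by the inclusion of generators `FreeGroup α → FreeGroup (Option α)`
and the substitution `y ↦ s` in the other direction. Each maps relators to relators (the
substitution kills `y s⁻¹`), and the two composites fix every generator modulo relators: trivially
on `α`, and on `y` because `y = s` holds in the new group.
-/

namespace PresentedGroup

variable {α β : Type*} {rels : Set (FreeGroup α)} {rels' : Set (FreeGroup β)}

def mapOfMemNormalClosure (φ : FreeGroup α →* FreeGroup β)
    (hφ : ∀ r ∈ rels, φ r ∈ Subgroup.normalClosure rels') :
    PresentedGroup rels →* PresentedGroup rels' :=
  QuotientGroup.map _ _ φ (Subgroup.normalClosure_le_normal hφ)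

def mulEquivOfMemNormalClosure (φ : FreeGroup α →* FreeGroup β) (ψ : FreeGroup β →* FreeGroup α)
    (hφ : ∀ r ∈ rels, φ r ∈ Subgroup.normalClosure rels')
    (hψ : ∀ r ∈ rels', ψ r ∈ Subgroup.normalClosure rels)
    (hψφ : ∀ a, mk rels (ψ (φ (.of a))) = of a) (hφψ : ∀ b, mk rels' (φ (ψ (.of b))) = of b) :
    PresentedGroup rels ≃* PresentedGroup rels' :=
  MonoidHom.toMulEquiv (mapOfMemNormalClosure φ hφ) (mapOfMemNormalClosure ψ hψ)
    (ext fun a => hψφ a) (ext fun b => hφψ b)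

end PresentedGroup

namespace FreeGroup

variable {α : Type*}

def substNone (s : FreeGroup α) : FreeGroup (Option α) →* FreeGroup α :=
  lift (Option.elim · s of)

@[simp]
theorem substNone_of_none (s : FreeGroup α) : substNone s (of none) = s :=
  lift_apply_of

@[simp]
theorem substNone_of_some (s : FreeGroup α) (a : α) : substNone s (of (some a)) = of a :=
  lift_apply_of

@[simp]
theorem substNone_map_some (s w : FreeGroup α) : substNone s (map some w) = w :=
  DFunLike.congr_fun (ext_hom ((substNone s).comp (map some)) (MonoidHom.id _) fun a => by simp) w

end FreeGroup

/-- Tietze transformations (T1)/(T2): introducing (or canceling) a generator `y`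
together with a relator `y·s⁻¹` preserves the isomorphism type of the presented
group. -/
theorem tietze_T1_T2 (α : Type) (rels : Set (FreeGroup α)) (s : FreeGroup α) :
    Nonempty (PresentedGroup rels ≃*
      PresentedGroup
        (insert (FreeGroup.of (none : Option α) * (FreeGroup.map Option.some s)⁻¹)
          (⇑(FreeGroup.map (Option.some : α → Option α)) '' rels))) := by
  refine ⟨PresentedGroup.mulEquivOfMemNormalClosure (FreeGroup.map some) (FreeGroup.substNone s)
    ?_ ?_ ?_ ?_⟩
  · exact fun r hr => Subgroup.subset_normalClosure (Set.mem_insert_of_mem _ ⟨r, hr, rfl⟩)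
  · rintro r (rfl | ⟨t, ht, rfl⟩)
    · simp [one_mem]
    · simpa using Subgroup.subset_normalClosure ht
  · intro a
    simp [PresentedGroup.of]
  · rintro (_ | a)
    · rw [FreeGroup.substNone_of_none]
      exact (PresentedGroup.mk_eq_mk_of_mul_inv_mem (Set.mem_insert _ _)).symm
    · simp [PresentedGroup.of]
end
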